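/- arXiv:1708.03992 — 3 statements merged into one kernel-verified Lean document; each statement's English description precedes it below -/
import Mathlib

section
/- Let L be a positive even integer and let H_L(λ) = 2 sin^L(λ/2) · Σ_{p=0}^{L/2-1} C(L/2-1+p, p) cos^{2p}(λ/2). Then H_L(λ) + H_L(λ - π) = 2 for all real λ. -/
/-!
Put `x = sin²(λ/2)`, `y = cos²(λ/2)` and `P_n(y) = ∑_{p<n} C(n-1+p, p) yᵖ`. The shift `λ ↦ λ - π`
exchanges `x` and `y`, so the claim is `xⁿ P_n(y) + yⁿ P_n(x) = 1` whenever `x + y = 1`.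
Pascal's rule gives `(1 - y) P_{n+1}(y) = P_n(y) + C(2n-1, n) yⁿ (1 - 2y)`; multiplying by `xⁿ` and
adding the same identity with `x` and `y` swapped, the correction terms cancel because
`(1 - 2y) + (1 - 2x) = 0`, and the claim follows by induction on `n`.
-/

open Finset

section
variable {R : Type*} [CommRing R]

theorem one_sub_mul_sum_choose_succ_mul_pow (M n : ℕ) (y : R) :
    (1 - y) * ∑ p ∈ range (n + 1), ((M + 1 + p).choose p : R) * y ^ p =
      ∑ p ∈ range (n + 1), ((M + p).choose p : R) * y ^ p -
        ((M + 1 + n).choose n : R) * y ^ (n + 1) := by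
  induction n with
  | zero => simp
  | succ n ih =>
    have pascal : ((M + 1 + (n + 1)).choose (n + 1) : R) =
        (M + 1 + n).choose n + (M + (n + 1)).choose (n + 1) := by
      rw [show M + 1 + (n + 1) = M + 1 + n + 1 by omega, Nat.choose_succ_succ',
        show M + (n + 1) = M + 1 + n by omega]
      push_cast; ring
    rw [sum_range_succ, mul_add, ih, sum_range_succ _ (n + 1), pascal]
    ring

theorem choose_add_self_succ_eq_two_mul (M : ℕ) :
    (M + 1 + (M + 1)).choose (M + 1) = 2 * (M + (M + 1)).choose (M + 1) := by
  rw [show M + 1 + (M + 1) = 2 * M + 1 + 1 by omega, Nat.choose_succ_succ',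
    show M + (M + 1) = 2 * M + 1 by omega, Nat.choose_symm_half]
  ring

theorem pow_mul_sum_choose_add_pow_mul_sum_choose_eq_one {x y : R} (hxy : x + y = 1) (M : ℕ) :
    x ^ (M + 1) * ∑ p ∈ range (M + 1), ((M + p).choose p : R) * y ^ p +
      y ^ (M + 1) * ∑ p ∈ range (M + 1), ((M + p).choose p : R) * x ^ p = 1 := by
  induction M with
  | zero => simpa using hxy
  | succ M ih =>
    have hx : x = 1 - y := eq_sub_of_add_eq hxy
    have hy : y = 1 - x := eq_sub_of_add_eq' hxy
    have step (z w : R) (hz : z = 1 - w) :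
        z ^ (M + 2) * ∑ p ∈ range (M + 2), ((M + 1 + p).choose p : R) * w ^ p =
          z ^ (M + 1) * ∑ p ∈ range (M + 1), ((M + p).choose p : R) * w ^ p +
            ((M + (M + 1)).choose (M + 1) : R) * (z * w) ^ (M + 1) * (1 - 2 * w) := by
      rw [pow_succ, mul_assoc, hz, one_sub_mul_sum_choose_succ_mul_pow, sum_range_succ _ (M + 1),
        choose_add_self_succ_eq_two_mul, ← hz]
      push_cast
      ring
    rw [step x y hx, step y x hy]
    linear_combination ih - 2 * ((M + (M + 1)).choose (M + 1) : R) * (x * y) ^ (M + 1) * hxy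
end

/-- Halfband (quadrature mirror) property of the Daubechies power transfer
function: `H_L(λ) + H_L(λ - π) = 2` for `L` a positive even integer, where
`H_L(λ) = 2 sin^L(λ/2) Σ_{p=0}^{L/2-1} C(L/2-1+p, p) cos^{2p}(λ/2)`. -/
theorem daubechies_halfband (L : ℕ) (hL : 0 < L) (hLeven : Even L)
    (H : ℝ → ℝ)
    (hH : ∀ lam : ℝ, H lam =
      2 * Real.sin (lam / 2) ^ L *
        ∑ p ∈ Finset.range (L / 2),
          ((L / 2 - 1 + p).choose p : ℝ) * Real.cos (lam / 2) ^ (2 * p)) :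
    ∀ lam : ℝ, H lam + H (lam - Real.pi) = 2 := by
  obtain ⟨M, rfl⟩ : ∃ M, L = 2 * (M + 1) := by
    obtain ⟨N, rfl⟩ := hLeven
    exact ⟨N - 1, by omega⟩
  intro lam
  have hsin : Real.sin ((lam - Real.pi) / 2) = -Real.cos (lam / 2) := by
    rw [sub_div, Real.sin_sub_pi_div_two]
  have hcos : Real.cos ((lam - Real.pi) / 2) = Real.sin (lam / 2) := by
    rw [sub_div, Real.cos_sub_pi_div_two]
  have hhalf : 2 * (M + 1) / 2 = M + 1 := by omega
  rw [hH, hH, hsin, hcos, hhalf, Nat.add_sub_cancel]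
  simp only [pow_mul, neg_sq]
  linear_combination
    2 * pow_mul_sum_choose_add_pow_mul_sum_choose_eq_one (Real.sin_sq_add_cos_sq (lam / 2)) M
end

section
/- Let Π¹ and Π² be two finite partitions of an interval [0,T] into consecutive half-open intervals, and let θ ∈ ℝ. Then there exist refinement-coarsening modifications Π̃¹ of Π¹ and Π̃² of Π² (obtained by merging all intervals of Π¹ contained in a single interval J_{-θ} with J ∈ Π², and symmetrically for Π²) such that: (i) Σ_{I∈Π̃¹} x_I y_I-type bilinear sums Σ_{I,J} X¹(I)X²(J) 1_{I ∩ J_{-θ} ≠ ∅} are unchanged for any additive interval functions X¹, X²; and (ii) max_{J∈Π̃²} Σ_{I∈Π̃¹} 1_{I ∩ J_{-θ} ≠ ∅} ≤ 3 and max_{I∈Π̃¹} Σ_{J∈Π̃²} 1_{I ∩ J_{-θ} ≠ ∅} ≤ 3. -/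
/-!
First delete every interior point of the first grid whose two adjacent cells lie in a single
lagged cell of the second grid; then delete every interior point of the second grid whose two
adjacent cells lie in a single (oppositely lagged) cell of the reduced first grid. A merged block
lies inside one cell of the other grid, so the block and each of its pieces meet exactly that
cell, and the increments over the pieces telescope: the bilinear sum does not change.
After the reduction no two consecutive cells of either grid fit inside one cell of the other
(a merged cell of the second grid sits inside a single cell of the first, which cannot contain two
of them), and a cell meeting four consecutive cells would contain the middle two.
-/

open Finset

theorem MonotoneOn.sub_const {α : Type*} [Preorder α] {s : Set α} {u : α → ℝ}
    (hu : MonotoneOn u s) (θ : ℝ) : MonotoneOn (fun k => u k - θ) s :=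
  fun _ ha _ hb hab => sub_le_sub_right (hu ha hb hab) θ

namespace HayashiYoshida

def cell (t : ℕ → ℝ) (i : ℕ) : Set ℝ := Set.Ioc (t i) (t (i + 1))

section Cells

variable {t : ℕ → ℝ} {n : ℕ}

lemma cell_nonempty (ht : StrictMonoOn t (Set.Iic n)) {i : ℕ} (hi : i < n) :
    (cell t i).Nonempty :=
  Set.nonempty_Ioc.2 (ht (by simp; omega) (by simp; omega) (Nat.lt_succ_self i))

lemma Ioc_subset_Ioc_of_monotoneOn (ht : MonotoneOn t (Set.Iic n)) {p p' q q' : ℕ}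
    (hp : p ≤ p') (hq : q' ≤ q) (hp' : p' ≤ n) (hqn : q ≤ n) :
    Set.Ioc (t p') (t q') ⊆ Set.Ioc (t p) (t q) :=
  Set.Ioc_subset_Ioc (ht (by simp; omega) (by simp; omega) hp)
    (ht (by simp; omega) (by simp; omega) hq)

lemma disjoint_cell (ht : MonotoneOn t (Set.Iic n)) {i j : ℕ} (hi : i < n) (hj : j < n)
    (hij : i ≠ j) : Disjoint (cell t i) (cell t j) := by
  rcases hij.lt_or_gt with h | h
  · exact Set.Ioc_disjoint_Ioc_of_le (ht (by simp; omega) (by simp; omega) h)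
  · exact (Set.Ioc_disjoint_Ioc_of_le (ht (by simp; omega) (by simp; omega) h)).symm

open scoped Classical in
lemma sum_ite_inter_cell_nonempty (ht : MonotoneOn t (Set.Iic n)) {S : Set ℝ}
    (hS : S.Nonempty) {k : ℕ} (hk : k < n) (hSk : S ⊆ cell t k) (f : ℕ → ℝ) :
    ∑ j ∈ range n, (if (S ∩ cell t j).Nonempty then f j else 0) = f k := by
  rw [sum_eq_single_of_mem k (mem_range.2 hk), if_pos (by rwa [Set.inter_eq_left.2 hSk])]
  intro j hj hjk
  rw [if_neg]
  rintro ⟨x, hxS, hxj⟩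
  exact Set.disjoint_left.1 (disjoint_cell ht (mem_range.1 hj) hk hjk) hxj (hSk hxS)

end Cells

lemma sum_range_sum_Ico_eq_sum_Ico {M : Type*} [AddCommMonoid M] {e : ℕ → ℕ}
    (he : Monotone e) (g : ℕ → M) (m : ℕ) :
    ∑ i ∈ range m, ∑ l ∈ Ico (e i) (e (i + 1)), g l = ∑ l ∈ Ico (e 0) (e m), g l := by
  induction m with
  | zero => simp
  | succ m ih =>
    rw [sum_range_succ, ih, sum_Ico_consecutive _ (he (Nat.zero_le m)) (he m.le_succ)]

def Survives (n : ℕ) (R : ℕ → Prop) (k : ℕ) : Prop := k = 0 ∨ n ≤ k ∨ ¬R k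

/-- Enumerates `0 = k₀ < k₁ < ⋯ < k_m = n`, the indices that survive deleting every interior
index satisfying `R`, and continues with all numbers past `n`, so that it is strictly monotone. -/
noncomputable def keptIndex (n : ℕ) (R : ℕ → Prop) : ℕ → ℕ := Nat.nth (Survives n R)

open scoped Classical in
noncomputable def keptCount (n : ℕ) (R : ℕ → Prop) : ℕ := Nat.count (Survives n R) n

section Kept

variable {n : ℕ} {R : ℕ → Prop}

lemma infinite_setOf_survives : (Set.ofPred (Survives n R)).Infinite :=
  (Set.Ici_infinite n).mono fun _ hk => Or.inr (Or.inl hk)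

lemma strictMono_keptIndex : StrictMono (keptIndex n R) :=
  Nat.nth_strictMono infinite_setOf_survives

lemma keptIndex_zero : keptIndex n R 0 = 0 :=
  Nat.nth_zero_of_zero (Or.inl rfl)

open scoped Classical in
lemma keptIndex_keptCount : keptIndex n R (keptCount n R) = n :=
  Nat.nth_count (Or.inr (Or.inl le_rfl))

open scoped Classical in
lemma keptCount_pos (hn : 0 < n) : 0 < keptCount n R := by
  simpa [keptCount] using Nat.count_strict_mono (p := Survives n R) (Or.inl rfl) hn

lemma keptIndex_le {i : ℕ} (hi : i ≤ keptCount n R) : keptIndex n R i ≤ n :=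
  (strictMono_keptIndex.monotone hi).trans_eq keptIndex_keptCount

lemma keptIndex_lt {i : ℕ} (hi : i < keptCount n R) : keptIndex n R i < n :=
  (strictMono_keptIndex hi).trans_eq keptIndex_keptCount

lemma of_keptIndex_lt_of_lt_keptIndex {i l : ℕ} (h₁ : keptIndex n R i < l)
    (h₂ : l < keptIndex n R (i + 1)) : R l := by
  by_contra hR
  exact (Nat.le_nth_of_lt_nth_succ h₂ (Or.inr (Or.inr hR))).not_gt h₁

lemma not_keptIndex {i : ℕ} (hi₀ : 0 < i) (hi : i < keptCount n R) : ¬R (keptIndex n R i) := by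
  have hpos : 0 < keptIndex n R i := keptIndex_zero.symm.trans_lt (strictMono_keptIndex hi₀)
  rcases Nat.nth_mem_of_infinite (infinite_setOf_survives (n := n) (R := R)) i with h | h | h
  · exact absurd h hpos.ne'
  · exact absurd h (keptIndex_lt hi).not_ge
  · exact h

end Kept

def Removable (t v : ℕ → ℝ) (N k : ℕ) : Prop :=
  ∃ j < N, Set.Ioc (t (k - 1)) (t (k + 1)) ⊆ cell v j

noncomputable def reduce (t v : ℕ → ℝ) (n N i : ℕ) : ℝ := t (keptIndex n (Removable t v N) i)

section Reduce

variable {t v : ℕ → ℝ} {n N : ℕ}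

local notation "κ" => keptIndex n (Removable t v N)

lemma exists_Ioc_subset_cell_of_removable (ht : StrictMonoOn t (Set.Iic n))
    (hv : MonotoneOn v (Set.Iic N)) {p q : ℕ} (hpq : p + 1 < q) (hq : q ≤ n)
    (hR : ∀ l, p < l → l < q → Removable t v N l) :
    ∃ k < N, Set.Ioc (t p) (t q) ⊆ cell v k := by
  induction q, hpq using Nat.le_induction with
  | base => simpa [Removable] using hR (p + 1) (by omega) (by omega)
  | succ q hpq ih =>
    obtain ⟨k, hk, hpk⟩ := ih (by omega) fun l h₁ h₂ => hR l h₁ (by omega)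
    obtain ⟨k', hk', hqk'⟩ := hR q (by omega) (by omega)
    have htq : t (q - 1) < t q := ht (by simp; omega) (by simp; omega) (by omega)
    have htq' : t q ∈ Set.Ioc (t p) (t q) :=
      ⟨ht (by simp; omega) (by simp; omega) (by omega), le_rfl⟩
    obtain rfl : k = k' := by
      by_contra hne
      exact Set.disjoint_left.1 (disjoint_cell hv hk hk' hne) (hpk htq')
        (hqk' ⟨htq, ht.monotoneOn (by simp; omega) (by simp; omega) q.le_succ⟩)
    refine ⟨k, hk, fun x hx => ?_⟩
    rcases le_or_gt x (t q) with hxq | hxq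
    · exact hpk ⟨hx.1, hxq⟩
    · exact hqk' ⟨htq.trans hxq, hx.2⟩

lemma strictMonoOn_reduce (ht : StrictMonoOn t (Set.Iic n)) :
    StrictMonoOn (reduce t v n N) (Set.Iic (keptCount n (Removable t v N))) :=
  fun _ hi _ hj hij => ht (keptIndex_le hi) (keptIndex_le hj) (strictMono_keptIndex hij)

lemma reduce_zero : reduce t v n N 0 = t 0 := congrArg t keptIndex_zero

lemma reduce_keptCount : reduce t v n N (keptCount n (Removable t v N)) = t n :=
  congrArg t keptIndex_keptCount

lemma exists_reduce_eq {i : ℕ} (hi : i ≤ keptCount n (Removable t v N)) :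
    ∃ k ≤ n, reduce t v n N i = t k :=
  ⟨_, keptIndex_le hi, rfl⟩

lemma keptIndex_succ_eq_or_exists_subset_cell (ht : StrictMonoOn t (Set.Iic n))
    (hv : MonotoneOn v (Set.Iic N)) {i : ℕ} (hi : i < keptCount n (Removable t v N)) :
    κ (i + 1) = κ i + 1 ∨ ∃ k < N, cell (reduce t v n N) i ⊆ cell v k := by
  rcases Nat.succ_le_of_lt (strictMono_keptIndex (lt_add_one i)) |>.eq_or_lt with h | h
  · exact Or.inl h.symm
  · exact Or.inr (exists_Ioc_subset_cell_of_removable ht hv h (keptIndex_le hi)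
      fun l h₁ h₂ => of_keptIndex_lt_of_lt_keptIndex h₁ h₂)

lemma not_Ioc_reduce_subset_cell (ht : MonotoneOn t (Set.Iic n)) {i j : ℕ}
    (hi : i + 2 ≤ keptCount n (Removable t v N)) (hj : j < N) :
    ¬Set.Ioc (reduce t v n N i) (reduce t v n N (i + 2)) ⊆ cell v j := by
  have h₁ : κ i < κ (i + 1) := strictMono_keptIndex (lt_add_one i)
  have h₂ : κ (i + 1) < κ (i + 2) := strictMono_keptIndex (lt_add_one (i + 1))
  have h₃ : κ (i + 2) ≤ n := keptIndex_le hi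
  intro hsub
  have hR : Removable t v N (κ (i + 1)) :=
    ⟨j, hj, (Ioc_subset_Ioc_of_monotoneOn ht (by omega) h₂ (by omega) h₃).trans hsub⟩
  exact not_keptIndex (by omega) (by omega) hR

open scoped Classical in
lemma sum_ite_cell_reduce_eq_sum_Ico (ht : StrictMonoOn t (Set.Iic n))
    (hv : MonotoneOn v (Set.Iic N)) (F c : ℕ → ℝ) {i : ℕ}
    (hi : i < keptCount n (Removable t v N)) :
    ∑ j ∈ range N, (if (cell (reduce t v n N) i ∩ cell v j).Nonempty then
        (F (κ (i + 1)) - F (κ i)) * c j else 0) =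
      ∑ l ∈ Ico (κ i) (κ (i + 1)),
        ∑ j ∈ range N, (if (cell t l ∩ cell v j).Nonempty then (F (l + 1) - F l) * c j else 0) := by
  have hcell : cell (reduce t v n N) i = Set.Ioc (t (κ i)) (t (κ (i + 1))) := rfl
  rcases keptIndex_succ_eq_or_exists_subset_cell ht hv hi with h | ⟨k, hk, hsub⟩
  · rw [hcell, h, Nat.Ico_succ_singleton, sum_singleton]
    rfl
  have hlt : κ i < κ (i + 1) := strictMono_keptIndex (lt_add_one i)
  have hle : κ (i + 1) ≤ n := keptIndex_le hi
  -- the block and each of its cells meet only the cell `k` of `v`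
  have hblock := sum_ite_inter_cell_nonempty hv (cell_nonempty (strictMonoOn_reduce ht) hi) hk hsub
    fun j => (F (κ (i + 1)) - F (κ i)) * c j
  have hpieces : ∀ l ∈ Ico (κ i) (κ (i + 1)),
      ∑ j ∈ range N, (if (cell t l ∩ cell v j).Nonempty then (F (l + 1) - F l) * c j else 0) =
        (F (l + 1) - F l) * c k := by
    intro l hl
    rw [mem_Ico] at hl
    exact sum_ite_inter_cell_nonempty hv (cell_nonempty ht (by omega)) hk
      ((Ioc_subset_Ioc_of_monotoneOn ht.monotoneOn hl.1 hl.2 (by omega) hle).trans hsub)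
      fun j => (F (l + 1) - F l) * c j
  rw [hblock, sum_congr rfl hpieces, ← sum_mul, sum_Ico_sub _ hlt.le]

open scoped Classical in
lemma sum_sum_cell_reduce (ht : StrictMonoOn t (Set.Iic n)) (hv : MonotoneOn v (Set.Iic N))
    (F c : ℕ → ℝ) :
    ∑ i ∈ range (keptCount n (Removable t v N)), ∑ j ∈ range N,
      (if (cell (reduce t v n N) i ∩ cell v j).Nonempty then
        (F (κ (i + 1)) - F (κ i)) * c j else 0) =
      ∑ l ∈ range n, ∑ j ∈ range N,
        (if (cell t l ∩ cell v j).Nonempty then (F (l + 1) - F l) * c j else 0) := by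
  rw [sum_congr rfl fun i hi => sum_ite_cell_reduce_eq_sum_Ico ht hv F c (mem_range.1 hi),
    sum_range_sum_Ico_eq_sum_Ico strictMono_keptIndex.monotone, keptIndex_zero,
    keptIndex_keptCount, Nat.Ico_zero_eq_range]

end Reduce

open scoped Classical in
lemma card_filter_cell_inter_nonempty_le_three {s : ℕ → ℝ} {m : ℕ}
    (hs : MonotoneOn s (Set.Iic m)) {a b : ℝ}
    (h : ∀ i, i + 2 ≤ m → ¬Set.Ioc (s i) (s (i + 2)) ⊆ Set.Ioc a b) :
    ((range m).filter fun i => (cell s i ∩ Set.Ioc a b).Nonempty).card ≤ 3 := by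
  set F := (range m).filter fun i => (cell s i ∩ Set.Ioc a b).Nonempty
  rcases F.eq_empty_or_nonempty with hF | hF
  · simp [hF]
  have hmem : ∀ i ∈ F, i < m ∧ a < s (i + 1) ∧ s i < b := by
    intro i hi
    obtain ⟨him, x, ⟨hx₁, hx₂⟩, hx₃, hx₄⟩ := mem_filter.1 hi
    exact ⟨mem_range.1 him, hx₃.trans_le hx₂, hx₁.trans_le hx₄⟩
  set p := F.min' hF
  obtain ⟨-, hpa, -⟩ := hmem p (F.min'_mem hF)
  calc F.card ≤ (Icc p (p + 2)).card :=
        card_le_card fun i hi => mem_Icc.2 ⟨F.min'_le i hi, ?_⟩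
    _ = 3 := by simp only [Nat.card_Icc]; omega
  obtain ⟨him, -, hib⟩ := hmem i hi
  by_contra! hpi
  -- otherwise the two cells following the first one meeting `(a, b]` lie inside it
  refine h (p + 1) (by omega) fun x hx => ⟨hpa.trans hx.1, hx.2.trans (le_of_lt ?_)⟩
  exact (hs (by simp; omega) (by simp; omega) (by omega)).trans_lt hib

lemma not_Ioc_subset_Ioc_sub {s : ℕ → ℝ} {m i k : ℕ} {a b θ : ℝ}
    (hs : StrictMonoOn s (Set.Iic m)) (hi : i + 2 ≤ m) (hk : k < m)
    (hab : Set.Ioc a b ⊆ Set.Ioc (s k + θ) (s (k + 1) + θ)) :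
    ¬Set.Ioc (s i) (s (i + 2)) ⊆ Set.Ioc (a - θ) (b - θ) := by
  intro h
  have hii : s i < s (i + 2) := hs (by simp; omega) (by simp; omega) (by omega)
  obtain ⟨hb, ha⟩ := (Set.Ioc_subset_Ioc_iff hii).1 h
  obtain ⟨hb', ha'⟩ := (Set.Ioc_subset_Ioc_iff (by linarith)).1 hab
  have hki : k ≤ i := (hs.le_iff_le (by simp; omega) (by simp; omega)).1 (by linarith)
  have hik : i + 2 ≤ k + 1 := (hs.le_iff_le (by simp; omega) (by simp; omega)).1 (by linarith)
  omega

open scoped Classical in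
noncomputable def hySum (s : ℕ → ℝ) (m : ℕ) (u : ℕ → ℝ) (N : ℕ) (θ : ℝ) (X Y : ℝ → ℝ) : ℝ :=
  ∑ i ∈ range m, ∑ j ∈ range N,
    if (Set.Ioc (s i) (s (i + 1)) ∩ Set.Ioc (u j - θ) (u (j + 1) - θ)).Nonempty then
      (X (s (i + 1)) - X (s i)) * (Y (u (j + 1)) - Y (u j)) else 0

lemma Ioc_inter_Ioc_sub_nonempty_comm {a b c d θ : ℝ} :
    (Set.Ioc a b ∩ Set.Ioc (c - θ) (d - θ)).Nonempty ↔
      (Set.Ioc c d ∩ Set.Ioc (a - -θ) (b - -θ)).Nonempty := by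
  simp only [sub_neg_eq_add]
  constructor
  · rintro ⟨x, ⟨h₁, h₂⟩, h₃, h₄⟩
    exact ⟨x + θ, ⟨by linarith, by linarith⟩, by linarith, by linarith⟩
  · rintro ⟨x, ⟨h₁, h₂⟩, h₃, h₄⟩
    exact ⟨x - θ, ⟨by linarith, by linarith⟩, by linarith, by linarith⟩

open scoped Classical in
lemma hySum_comm (s : ℕ → ℝ) (m : ℕ) (u : ℕ → ℝ) (N : ℕ) (θ : ℝ) (X Y : ℝ → ℝ) :
    hySum s m u N θ X Y = hySum u N s m (-θ) Y X := by
  unfold hySum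
  rw [sum_comm]
  refine sum_congr rfl fun j _ => sum_congr rfl fun i _ => ?_
  rw [mul_comm]
  exact if_congr Ioc_inter_Ioc_sub_nonempty_comm rfl rfl

lemma hySum_reduce {t u : ℕ → ℝ} {n N : ℕ} (ht : StrictMonoOn t (Set.Iic n))
    (hu : MonotoneOn u (Set.Iic N)) (θ : ℝ) (X Y : ℝ → ℝ) :
    hySum (reduce t (fun k => u k - θ) n N) (keptCount n (Removable t (fun k => u k - θ) N))
      u N θ X Y = hySum t n u N θ X Y :=
  sum_sum_cell_reduce ht (hu.sub_const θ) (fun l => X (t l)) fun j => Y (u (j + 1)) - Y (u j)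

end HayashiYoshida

open HayashiYoshida

open scoped Classical in
theorem hayashi_yoshida_reduction_general
    (T θ : ℝ) (n1 n2 : ℕ) (hn1 : 0 < n1) (hn2 : 0 < n2)
    (t1 t2 : ℕ → ℝ)
    (ht1 : StrictMonoOn t1 (Set.Iic n1)) (ht2 : StrictMonoOn t2 (Set.Iic n2))
    (ht10 : t1 0 = 0) (ht1T : t1 n1 = T) (ht20 : t2 0 = 0) (ht2T : t2 n2 = T) :
    ∃ (m1 m2 : ℕ) (s1 s2 : ℕ → ℝ),
      0 < m1 ∧ 0 < m2 ∧
      StrictMonoOn s1 (Set.Iic m1) ∧ StrictMonoOn s2 (Set.Iic m2) ∧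
      s1 0 = 0 ∧ s1 m1 = T ∧ s2 0 = 0 ∧ s2 m2 = T ∧
      -- the new partitions are coarsenings of the original ones:
      (∀ i ≤ m1, ∃ k ≤ n1, s1 i = t1 k) ∧ (∀ j ≤ m2, ∃ k ≤ n2, s2 j = t2 k) ∧
      -- (i) the Hayashi–Yoshida bilinear sums are unchanged:
      (∀ X1 X2 : ℝ → ℝ,
        (∑ i ∈ Finset.range m1, ∑ j ∈ Finset.range m2,
          if (Set.Ioc (s1 i) (s1 (i + 1)) ∩
              Set.Ioc (s2 j - θ) (s2 (j + 1) - θ)).Nonempty then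
            (X1 (s1 (i + 1)) - X1 (s1 i)) * (X2 (s2 (j + 1)) - X2 (s2 j)) else 0)
        = ∑ i ∈ Finset.range n1, ∑ j ∈ Finset.range n2,
          if (Set.Ioc (t1 i) (t1 (i + 1)) ∩
              Set.Ioc (t2 j - θ) (t2 (j + 1) - θ)).Nonempty then
            (X1 (t1 (i + 1)) - X1 (t1 i)) * (X2 (t2 (j + 1)) - X2 (t2 j)) else 0) ∧
      -- (ii) bounded overlap in both directions:
      (∀ j < m2, ((Finset.range m1).filter fun i =>
        (Set.Ioc (s1 i) (s1 (i + 1)) ∩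
          Set.Ioc (s2 j - θ) (s2 (j + 1) - θ)).Nonempty).card ≤ 3) ∧
      (∀ i < m1, ((Finset.range m2).filter fun j =>
        (Set.Ioc (s1 i) (s1 (i + 1)) ∩
          Set.Ioc (s2 j - θ) (s2 (j + 1) - θ)).Nonempty).card ≤ 3) := by
  set s1 := reduce t1 (fun k => t2 k - θ) n1 n2
  set m1 := keptCount n1 (Removable t1 (fun k => t2 k - θ) n2)
  set s2 := reduce t2 (fun k => s1 k - -θ) n2 m1
  set m2 := keptCount n2 (Removable t2 (fun k => s1 k - -θ) m1)
  have hs1 : StrictMonoOn s1 (Set.Iic m1) := strictMonoOn_reduce ht1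
  have hs2 : StrictMonoOn s2 (Set.Iic m2) := strictMonoOn_reduce ht2
  refine ⟨m1, m2, s1, s2, keptCount_pos hn1, keptCount_pos hn2, hs1, hs2,
    reduce_zero.trans ht10, reduce_keptCount.trans ht1T, reduce_zero.trans ht20,
    reduce_keptCount.trans ht2T, fun i => exists_reduce_eq, fun j => exists_reduce_eq,
    fun X1 X2 => ?_, fun j hj => ?_, fun i hi => ?_⟩
  · calc hySum s1 m1 s2 m2 θ X1 X2 = hySum s2 m2 s1 m1 (-θ) X2 X1 := hySum_comm ..
      _ = hySum t2 n2 s1 m1 (-θ) X2 X1 := hySum_reduce ht2 hs1.monotoneOn _ _ _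
      _ = hySum s1 m1 t2 n2 θ X1 X2 := by rw [hySum_comm, neg_neg]
      _ = hySum t1 n1 t2 n2 θ X1 X2 := hySum_reduce ht1 ht2.monotoneOn _ _ _
  · refine card_filter_cell_inter_nonempty_le_three hs1.monotoneOn fun i hi hsub => ?_
    rcases keptIndex_succ_eq_or_exists_subset_cell ht2 (hs1.monotoneOn.sub_const (-θ)) hj
      with h | ⟨k, hk, hsk⟩
    · rw [show s2 (j + 1) = _ from congrArg t2 h] at hsub
      exact not_Ioc_reduce_subset_cell ht1.monotoneOn hi (keptIndex_lt hj) hsub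
    · refine not_Ioc_subset_Ioc_sub hs1 hi hk ?_ hsub
      rwa [← sub_neg_eq_add (s1 k), ← sub_neg_eq_add (s1 (k + 1))]
  · rw [filter_congr fun j _ => Ioc_inter_Ioc_sub_nonempty_comm]
    exact card_filter_cell_inter_nonempty_le_three hs2.monotoneOn fun j hj =>
      not_Ioc_reduce_subset_cell ht2.monotoneOn hj hi

open scoped Classical in
/-- Hayashi–Yoshida reduction procedure: given two partitions of `[0,T]` into
consecutive half-open intervals (encoded by their strictly increasing sequences
of endpoints `t1`, `t2`) and a lag `θ`, there exist coarsenings `s1` of `t1`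
and `s2` of `t2` (obtained by merging consecutive intervals) such that
(i) the Hayashi–Yoshida bilinear sums
`Σ_{i,j} X¹(I_i) X²(J_j) 1_{I_i ∩ (J_j - θ) ≠ ∅}` are unchanged for all
additive interval functions `X¹, X²`, and (ii) every interval of one partition
overlaps at most 3 intervals of the other. -/
theorem hayashi_yoshida_reduction
    (T θ : ℝ) (hT : 0 < T) (n1 n2 : ℕ) (hn1 : 0 < n1) (hn2 : 0 < n2)
    (t1 t2 : ℕ → ℝ)
    (ht1 : StrictMonoOn t1 (Set.Iic n1)) (ht2 : StrictMonoOn t2 (Set.Iic n2))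
    (ht10 : t1 0 = 0) (ht1T : t1 n1 = T) (ht20 : t2 0 = 0) (ht2T : t2 n2 = T) :
    ∃ (m1 m2 : ℕ) (s1 s2 : ℕ → ℝ),
      0 < m1 ∧ 0 < m2 ∧
      StrictMonoOn s1 (Set.Iic m1) ∧ StrictMonoOn s2 (Set.Iic m2) ∧
      s1 0 = 0 ∧ s1 m1 = T ∧ s2 0 = 0 ∧ s2 m2 = T ∧
      -- the new partitions are coarsenings of the original ones:
      (∀ i ≤ m1, ∃ k ≤ n1, s1 i = t1 k) ∧ (∀ j ≤ m2, ∃ k ≤ n2, s2 j = t2 k) ∧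
      -- (i) the Hayashi–Yoshida bilinear sums are unchanged:
      (∀ X1 X2 : ℝ → ℝ,
        (∑ i ∈ Finset.range m1, ∑ j ∈ Finset.range m2,
          if (Set.Ioc (s1 i) (s1 (i + 1)) ∩
              Set.Ioc (s2 j - θ) (s2 (j + 1) - θ)).Nonempty then
            (X1 (s1 (i + 1)) - X1 (s1 i)) * (X2 (s2 (j + 1)) - X2 (s2 j)) else 0)
        = ∑ i ∈ Finset.range n1, ∑ j ∈ Finset.range n2,
          if (Set.Ioc (t1 i) (t1 (i + 1)) ∩
              Set.Ioc (t2 j - θ) (t2 (j + 1) - θ)).Nonempty then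
            (X1 (t1 (i + 1)) - X1 (t1 i)) * (X2 (t2 (j + 1)) - X2 (t2 j)) else 0) ∧
      -- (ii) bounded overlap in both directions:
      (∀ j < m2, ((Finset.range m1).filter fun i =>
        (Set.Ioc (s1 i) (s1 (i + 1)) ∩
          Set.Ioc (s2 j - θ) (s2 (j + 1) - θ)).Nonempty).card ≤ 3) ∧
      (∀ i < m1, ((Finset.range m2).filter fun j =>
        (Set.Ioc (s1 i) (s1 (i + 1)) ∩
          Set.Ioc (s2 j - θ) (s2 (j + 1) - θ)).Nonempty).card ≤ 3) :=
  hayashi_yoshida_reduction_general T θ n1 n2 hn1 hn2 t1 t2 ht1 ht2 ht10 ht1T ht20 ht2T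
end

section
/- Let H_L(λ) = 2 sin^L(λ/2) Σ_{p=0}^{L/2-1} C(L/2-1+p, p) cos^{2p}(λ/2) with L even, and G_L(λ) = H_L(λ-π). Then for every fixed λ with π/2 < |λ| ≤ π one has H_L(λ) → 2 as L → ∞, and for every fixed λ with 0 < |λ| < π/2 one has H_L(λ) → 0 as L → ∞. -/
/-!
Put `x = sin²(λ/2)` and `y = cos²(λ/2)`, so that `x + y = 1` and `H_{2n}(λ) = 2 B_{n-1}(x, y)` with
`B_k(x, y) = x^(k+1) ∑_{p ≤ k} C(k+p, p) y^p`. Daubechies' identity `B_k(x, y) + B_k(y, x) = 1`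
follows by induction on `k` from a telescoping identity for the partial sums. If `x < 1/2`, the
crude bound `C(k+p, p) ≤ 2^(k+p)` gives `B_k(x, y) ≤ x (k+1) r^k` with `r = max (2x) (4xy) < 1`,
so `B_k(x, y) → 0`, and by the identity `B_k(y, x) → 1`. Finally `x < 1/2` exactly when
`cos λ > 0`, i.e. `|λ| < π/2`.
-/

open Finset Filter Topology

noncomputable def daubechiesPoly (k : ℕ) (x y : ℝ) : ℝ :=
  x ^ (k + 1) * ∑ p ∈ range (k + 1), ((k + p).choose p : ℝ) * y ^ p

lemma one_sub_mul_sum_choose_succ_add_mul_pow (c : ℝ) (k n : ℕ) :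
    (1 - c) * ∑ p ∈ range (n + 1), ((k + 1 + p).choose p : ℝ) * c ^ p
      = ∑ p ∈ range (n + 1), ((k + p).choose p : ℝ) * c ^ p
        - ((k + 1 + n).choose n : ℝ) * c ^ (n + 1) := by
  induction n with
  | zero => simp
  | succ n ih =>
    have pascal : ((k + 1 + (n + 1)).choose (n + 1) : ℝ)
        = ((k + 1 + n).choose n : ℝ) + ((k + 1 + n).choose (n + 1) : ℝ) := by
      rw [show k + 1 + (n + 1) = k + 1 + n + 1 by omega, Nat.choose_succ_succ, Nat.cast_add]
    rw [sum_range_succ, sum_range_succ (fun p => ((k + p).choose p : ℝ) * c ^ p),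
      show k + (n + 1) = k + 1 + n by omega, pascal]
    linear_combination ih

lemma choose_two_mul_add_two_succ (k : ℕ) :
    (2 * k + 2).choose (k + 1) = 2 * (2 * k + 1).choose (k + 1) := by
  rw [Nat.choose_succ_succ, ← Nat.choose_symm_half]
  ring

section DaubechiesPoly

variable {x y : ℝ}

lemma daubechiesPoly_succ (hxy : x + y = 1) (k : ℕ) :
    daubechiesPoly (k + 1) x y = daubechiesPoly k x y
      + ((2 * k + 1).choose (k + 1) : ℝ) * x ^ (k + 1) * y ^ (k + 1) * (x - y) := by
  have telescope := one_sub_mul_sum_choose_succ_add_mul_pow y k (k + 1)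
  rw [sum_range_succ (fun p => ((k + p).choose p : ℝ) * y ^ p)] at telescope
  have central : ((k + 1 + (k + 1)).choose (k + 1) : ℝ) = 2 * ((k + (k + 1)).choose (k + 1) : ℝ) := by
    rw [show k + 1 + (k + 1) = 2 * k + 2 by omega, choose_two_mul_add_two_succ]
    push_cast
    ring_nf
  unfold daubechiesPoly
  rw [show 2 * k + 1 = k + (k + 1) by omega]
  linear_combination x ^ (k + 1) * telescope
    + x ^ (k + 1) * (∑ p ∈ range (k + 2), ((k + 1 + p).choose p : ℝ) * y ^ p) * hxy
    - x ^ (k + 1) * y ^ (k + 2) * central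
    - ((k + (k + 1)).choose (k + 1) : ℝ) * x ^ (k + 1) * y ^ (k + 1) * hxy

lemma daubechiesPoly_add_swap (hxy : x + y = 1) (k : ℕ) :
    daubechiesPoly k x y + daubechiesPoly k y x = 1 := by
  induction k with
  | zero => simpa [daubechiesPoly] using hxy
  | succ k ih =>
    rw [daubechiesPoly_succ hxy, daubechiesPoly_succ (by linarith : y + x = 1)]
    linear_combination ih

lemma daubechiesPoly_nonneg (hx : 0 ≤ x) (hy : 0 ≤ y) (k : ℕ) : 0 ≤ daubechiesPoly k x y := by
  unfold daubechiesPoly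
  positivity

lemma daubechiesPoly_le (hx : 0 ≤ x) (hy : 0 ≤ y) (k : ℕ) :
    daubechiesPoly k x y ≤ x * ((k + 1) * (2 * x * max 1 (2 * y)) ^ k) := by
  have term_le : ∀ p ∈ range (k + 1),
      x ^ (k + 1) * (((k + p).choose p : ℝ) * y ^ p) ≤ x * (2 * x * max 1 (2 * y)) ^ k := by
    intro p hp
    have hpk : p ≤ k := Nat.lt_succ_iff.mp (mem_range.mp hp)
    have choose_le : ((k + p).choose p : ℝ) ≤ 2 ^ k * 2 ^ p := by
      rw [← pow_add]
      exact_mod_cast Nat.choose_le_two_pow (k + p) p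
    have pow_le : (2 * y) ^ p ≤ max 1 (2 * y) ^ k :=
      calc (2 * y) ^ p ≤ max 1 (2 * y) ^ p := by gcongr; exact le_max_right _ _
        _ ≤ max 1 (2 * y) ^ k := pow_le_pow_right₀ (le_max_left _ _) hpk
    calc x ^ (k + 1) * (((k + p).choose p : ℝ) * y ^ p)
        ≤ x ^ (k + 1) * (2 ^ k * 2 ^ p * y ^ p) := by gcongr
      _ = x * (2 * x) ^ k * (2 * y) ^ p := by ring
      _ ≤ x * (2 * x) ^ k * max 1 (2 * y) ^ k := by gcongr
      _ = x * (2 * x * max 1 (2 * y)) ^ k := by ring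
  calc daubechiesPoly k x y ≤ ∑ _p ∈ range (k + 1), x * (2 * x * max 1 (2 * y)) ^ k := by
        rw [daubechiesPoly, mul_sum]
        exact sum_le_sum term_le
    _ = x * ((k + 1) * (2 * x * max 1 (2 * y)) ^ k) := by
        rw [sum_const, card_range, nsmul_eq_mul]
        push_cast
        ring

lemma tendsto_daubechiesPoly_zero (hx : 0 ≤ x) (hx_lt : x < 1 / 2) (hxy : x + y = 1) :
    Tendsto (fun k => daubechiesPoly k x y) atTop (𝓝 0) := by
  have hy : 0 ≤ y := by linarith
  -- `4xy < (x + y)² = 1` since `x ≠ y`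
  have hr_lt : 2 * x * max 1 (2 * y) < 1 := by
    rw [mul_max_of_nonneg _ _ (by positivity)]
    exact max_lt (by linarith) (by nlinarith)
  set r := 2 * x * max 1 (2 * y)
  have hr : 0 ≤ r := by positivity
  have bound_tendsto : Tendsto (fun k : ℕ => x * ((k + 1) * r ^ k)) atTop (𝓝 0) := by
    have h := ((tendsto_self_mul_const_pow_of_lt_one hr hr_lt).add
      (tendsto_pow_atTop_nhds_zero_of_lt_one hr hr_lt)).const_mul x
    simp only [add_zero, mul_zero] at h
    refine h.congr fun k => ?_
    ring
  exact tendsto_of_tendsto_of_tendsto_of_le_of_le tendsto_const_nhds bound_tendsto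
    (daubechiesPoly_nonneg hx hy) (daubechiesPoly_le hx hy)

lemma tendsto_daubechiesPoly_one (hy : 0 ≤ y) (hy_lt : y < 1 / 2) (hxy : x + y = 1) :
    Tendsto (fun k => daubechiesPoly k x y) atTop (𝓝 1) := by
  have hyx : y + x = 1 := by linarith
  have h := (tendsto_daubechiesPoly_zero hy hy_lt hyx).const_sub 1
  rw [sub_zero] at h
  refine h.congr fun k => ?_
  linarith [daubechiesPoly_add_swap hyx k]

end DaubechiesPoly

lemma cos_sq_half (θ : ℝ) : Real.cos (θ / 2) ^ 2 = 1 / 2 + Real.cos θ / 2 := by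
  rw [Real.cos_sq, mul_div_cancel₀ θ two_ne_zero]

lemma transfer_eq_two_mul_daubechiesPoly (lam : ℝ) (k : ℕ) :
    2 * Real.sin (lam / 2) ^ (2 * (k + 1)) *
        ∑ p ∈ range (2 * (k + 1) / 2), ((2 * (k + 1) / 2 - 1 + p).choose p : ℝ) *
          Real.cos (lam / 2) ^ (2 * p)
      = 2 * daubechiesPoly k (Real.sin (lam / 2) ^ 2) (Real.cos (lam / 2) ^ 2) := by
  simp only [daubechiesPoly, Nat.mul_div_cancel_left _ two_pos, Nat.add_sub_cancel, pow_mul]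
  ring

/-- Pointwise convergence of the Daubechies power transfer function
`H_L(λ) = 2 sin^L(λ/2) Σ_{p=0}^{L/2-1} C(L/2-1+p, p) cos^{2p}(λ/2)` (for even
`L → ∞`) to the ideal high-pass filter: `H_L(λ) → 2` for `π/2 < |λ| ≤ π` and
`H_L(λ) → 0` for `0 < |λ| < π/2`. -/
theorem daubechies_power_transfer_limit
    (H : ℕ → ℝ → ℝ)
    (hH : ∀ (L : ℕ) (lam : ℝ), H L lam =
      2 * Real.sin (lam / 2) ^ L *
        ∑ p ∈ Finset.range (L / 2),
          ((L / 2 - 1 + p).choose p : ℝ) * Real.cos (lam / 2) ^ (2 * p)) :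
    (∀ lam : ℝ, Real.pi / 2 < |lam| → |lam| ≤ Real.pi →
      Tendsto (fun m : ℕ => H (2 * m) lam) atTop (nhds 2)) ∧
    (∀ lam : ℝ, 0 < |lam| → |lam| < Real.pi / 2 →
      Tendsto (fun m : ℕ => H (2 * m) lam) atTop (nhds 0)) := by
  have hH_succ (lam : ℝ) (k : ℕ) : H (2 * (k + 1)) lam =
      2 * daubechiesPoly k (Real.sin (lam / 2) ^ 2) (Real.cos (lam / 2) ^ 2) := by
    rw [hH, transfer_eq_two_mul_daubechiesPoly]
  refine ⟨fun lam hlo hhi => ?_, fun lam _ hhi => ?_⟩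
  · have hcos : Real.cos lam < 0 := by
      rw [← Real.cos_abs]
      exact Real.cos_neg_of_pi_div_two_lt_of_lt hlo (by linarith [Real.pi_pos])
    have hlim := tendsto_daubechiesPoly_one (sq_nonneg _)
      (by rw [cos_sq_half]; linarith) (Real.sin_sq_add_cos_sq (lam / 2))
    rw [← tendsto_add_atTop_iff_nat 1]
    simpa [hH_succ] using hlim.const_mul 2
  · have hcos : 0 < Real.cos lam := by
      rw [← Real.cos_abs]
      exact Real.cos_pos_of_mem_Ioo ⟨by linarith [abs_nonneg lam, Real.pi_pos], hhi⟩
    have hlim := tendsto_daubechiesPoly_zero (sq_nonneg _)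
      (by rw [Real.sin_sq, cos_sq_half]; linarith) (Real.sin_sq_add_cos_sq (lam / 2))
    rw [← tendsto_add_atTop_iff_nat 1]
    simpa [hH_succ] using hlim.const_mul 2
end
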